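/- arXiv:2103.02112 — 6 statements merged into one kernel-verified Lean document; each statement's English description precedes it below -/
import Mathlib

section
/- The quartic polynomial 4x⁴ − 8x³ + 8x² − 8x + 3 has exactly one real root x with 0 < x < 1. -/
/-- The quartic polynomial `4x⁴ − 8x³ + 8x² − 8x + 3` has exactly one real root `x`
with `0 < x < 1`. -/
theorem unique_root_c :
    ∃! x : ℝ, 0 < x ∧ x < 1 ∧ 4 * x ^ 4 - 8 * x ^ 3 + 8 * x ^ 2 - 8 * x + 3 = 0 := by
  have hex : ∃ x ∈ Set.Ioo (0:ℝ) 1,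
      4 * x ^ 4 - 8 * x ^ 3 + 8 * x ^ 2 - 8 * x + 3 = 0 := by
    have hcont : ContinuousOn (fun x : ℝ => 4 * x ^ 4 - 8 * x ^ 3 + 8 * x ^ 2 - 8 * x + 3)
        (Set.Icc (0:ℝ) 1) := by fun_prop
    have h := intermediate_value_Ioo' (by norm_num : (0:ℝ) ≤ 1) hcont
    have h0 : (0:ℝ) ∈ Set.Ioo
        ((fun x : ℝ => 4 * x ^ 4 - 8 * x ^ 3 + 8 * x ^ 2 - 8 * x + 3) 1)
        ((fun x : ℝ => 4 * x ^ 4 - 8 * x ^ 3 + 8 * x ^ 2 - 8 * x + 3) 0) := by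
      constructor <;> norm_num
    obtain ⟨x, hx, hfx⟩ := h h0
    exact ⟨x, hx, hfx⟩
  obtain ⟨x, hx, hfx⟩ := hex
  refine ⟨x, ⟨hx.1, hx.2, hfx⟩, ?_⟩
  rintro y ⟨hy0, hy1, hfy⟩
  have key : (y - x) * (4*(y^3 + y^2*x + y*x^2 + x^3) - 8*(y^2 + y*x + x^2)
      + 8*(y + x) - 8) = 0 := by linear_combination hfy - hfx
  have hneg : 4*(y^3 + y^2*x + y*x^2 + x^3) - 8*(y^2 + y*x + x^2)
      + 8*(y + x) - 8 < 0 := by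
    nlinarith [mul_pos hy0 hx.1, sq_nonneg (y - x), sq_nonneg (y + x),
      mul_pos (sub_pos.mpr hy1) (sub_pos.mpr hx.2),
      mul_pos hy0 (sub_pos.mpr hx.2), mul_pos hx.1 (sub_pos.mpr hy1),
      sq_nonneg (y + x - 1)]
  have := mul_eq_zero.mp key
  rcases this with h | h
  · linarith
  · linarith
end

section
/- The quartic polynomial 12x⁴ − 32x³ + 24x² − 4x − 1 has exactly one real root x with x > 1. -/
/-!
Writing the quartic as `4 x (x - 1) (3x² - 5x + 1) - 1`, a root `x > 1` must make the last factor
positive. On the part of `(1, ∞)` where it is positive, both `x (x - 1)` and `3x² - 5x + 1` are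
positive and strictly increasing, so the quartic is strictly increasing there and has at most one
root. A root exists in `(1, 2)` since the quartic takes the values `-1` and `23` at the endpoints.
-/

open Set

def deltaQuartic (x : ℝ) : ℝ := 12 * x ^ 4 - 32 * x ^ 3 + 24 * x ^ 2 - 4 * x - 1

theorem deltaQuartic_eq (x : ℝ) :
    deltaQuartic x = 4 * (x * (x - 1)) * (3 * x ^ 2 - 5 * x + 1) - 1 := by
  unfold deltaQuartic; ring

theorem continuous_deltaQuartic : Continuous deltaQuartic := by
  unfold deltaQuartic; fun_prop

theorem exists_deltaQuartic_eq_zero_mem_Ioo : ∃ x ∈ Ioo (1 : ℝ) 2, deltaQuartic x = 0 :=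
  intermediate_value_Ioo (by norm_num) continuous_deltaQuartic.continuousOn
    (by norm_num [deltaQuartic])

theorem strictMonoOn_deltaQuartic :
    StrictMonoOn deltaQuartic {x | 1 < x ∧ 0 < 3 * x ^ 2 - 5 * x + 1} := by
  rintro x ⟨hx1, hx⟩ y ⟨hy1, hy⟩ hxy
  have hprod : x * (x - 1) < y * (y - 1) := by nlinarith
  have hquad : 3 * x ^ 2 - 5 * x + 1 < 3 * y ^ 2 - 5 * y + 1 := by nlinarith
  have hprod_pos : 0 < x * (x - 1) := by nlinarith
  rw [deltaQuartic_eq, deltaQuartic_eq]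
  gcongr

theorem quadratic_pos_of_deltaQuartic_eq_zero {x : ℝ} (hx : 1 < x) (h : deltaQuartic x = 0) :
    0 < 3 * x ^ 2 - 5 * x + 1 := by
  rw [deltaQuartic_eq] at h
  have hprod_pos : 0 < 4 * (x * (x - 1)) := by nlinarith
  exact pos_of_mul_pos_right (by linarith) hprod_pos.le

/-- The quartic polynomial `12x⁴ − 32x³ + 24x² − 4x − 1` has exactly one real root `x`
with `x > 1`. -/
theorem unique_root_delta0 :
    ∃! x : ℝ, 1 < x ∧ 12 * x ^ 4 - 32 * x ^ 3 + 24 * x ^ 2 - 4 * x - 1 = 0 := by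
  change ∃! x : ℝ, 1 < x ∧ deltaQuartic x = 0
  obtain ⟨x, ⟨hx1, -⟩, hx⟩ := exists_deltaQuartic_eq_zero_mem_Ioo
  refine ⟨x, ⟨hx1, hx⟩, fun y ⟨hy1, hy⟩ => ?_⟩
  exact strictMonoOn_deltaQuartic.injOn ⟨hy1, quadratic_pos_of_deltaQuartic_eq_zero hy1 hy⟩
    ⟨hx1, quadratic_pos_of_deltaQuartic_eq_zero hx1 hx⟩ (hy.trans hx.symm)
end

section
/- The quartic polynomial 183x⁴ − 352x³ + 214x² − 40x − 1 has exactly one real root x with 0 < x < 1. -/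
/-- On `(0, 9/10]` the quartic is negative. -/
lemma quartic_neg {y : ℝ} (h0 : 0 < y) (h9 : y ≤ 9/10) :
    183 * y ^ 4 - 352 * y ^ 3 + 214 * y ^ 2 - 40 * y - 1 < 0 := by
  rcases le_or_gt y (1/2) with h | h
  · have t1 : 0 ≤ y * (1/2 - y) := mul_nonneg h0.le (by linarith)
    nlinarith [mul_nonneg (mul_nonneg t1 t1) (sq_nonneg (y - 41/100)),
      mul_nonneg t1 (sq_nonneg (y - 41/100)),
      mul_nonneg (mul_nonneg h0.le h0.le) (show (0:ℝ) ≤ 1/2 - y by linarith),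
      mul_nonneg t1 t1, sq_nonneg (y - 41/100), mul_pos h0 h0,
      mul_nonneg (mul_nonneg h0.le h0.le) h0.le]
  · have t1 : 0 ≤ (y - 1/2) * (9/10 - y) :=
      mul_nonneg (by linarith) (by linarith)
    nlinarith [mul_nonneg t1 (sq_nonneg (y - 13/25)),
      mul_nonneg (mul_nonneg (show (0:ℝ) ≤ y - 1/2 by linarith)
        (show (0:ℝ) ≤ y - 1/2 by linarith)) (show (0:ℝ) ≤ 9/10 - y by linarith),
      mul_nonneg (sq_nonneg (y - 1/2)) (show (0:ℝ) ≤ y - 1/2 by linarith),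
      sq_nonneg (y - 13/25), mul_nonneg t1 t1]

/-- The quartic polynomial `183x⁴ − 352x³ + 214x² − 40x − 1` has exactly one real root `x`
with `0 < x < 1`. -/
theorem unique_root_alpha :
    ∃! x : ℝ, 0 < x ∧ x < 1 ∧ 183 * x ^ 4 - 352 * x ^ 3 + 214 * x ^ 2 - 40 * x - 1 = 0 := by
  set f : ℝ → ℝ := fun x => 183 * x ^ 4 - 352 * x ^ 3 + 214 * x ^ 2 - 40 * x - 1 with hf
  have hc : ContinuousOn f (Set.Icc (9/10 : ℝ) 1) := by
    apply Continuous.continuousOn; fun_prop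
  have hiv := intermediate_value_Ioo (by norm_num : (9/10 : ℝ) ≤ 1) hc
  have h0 : (0 : ℝ) ∈ Set.Ioo (f (9/10)) (f 1) := by
    constructor <;> · simp only [hf]; norm_num
  obtain ⟨x, hx, hfx⟩ := hiv h0
  obtain ⟨hx9, hx1⟩ := hx
  refine ⟨x, ⟨by linarith, hx1, hfx⟩, ?_⟩
  rintro y ⟨hy0, hy1, hfy⟩
  have hy9 : 9/10 < y := by
    by_contra h
    push_neg at h
    have := quartic_neg hy0 h
    linarith
  -- both x and y in (9/10, 1); show equality
  have hkey : (y - x) * (183*(y^3+y^2*x+y*x^2+x^3) - 352*(y^2+y*x+x^2) + 214*(y+x) - 40)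
      = 0 := by
    have hfx' : 183 * x ^ 4 - 352 * x ^ 3 + 214 * x ^ 2 - 40 * x - 1 = 0 := hfx
    linear_combination hfy - hfx'
  have hQ : 183*(y^3+y^2*x+y*x^2+x^3) - 352*(y^2+y*x+x^2) + 214*(y+x) - 40 > 0 := by
    nlinarith [mul_nonneg (sub_nonneg.2 hx9.le) (sub_nonneg.2 hy9.le),
      sq_nonneg (x - 9/10), sq_nonneg (y - 9/10), sq_nonneg (x - y),
      mul_nonneg (mul_nonneg (sub_nonneg.2 hx9.le) (sub_nonneg.2 hy9.le)) (sub_nonneg.2 hx9.le),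
      mul_nonneg (mul_nonneg (sub_nonneg.2 hx9.le) (sub_nonneg.2 hy9.le)) (sub_nonneg.2 hy9.le),
      mul_nonneg (sq_nonneg (x - 9/10)) (sub_nonneg.2 hy9.le),
      mul_nonneg (sq_nonneg (y - 9/10)) (sub_nonneg.2 hx9.le)]
  have : y - x = 0 := by
    rcases mul_eq_zero.1 hkey with h | h
    · exact h
    · linarith
  linarith
end

section
/- Let c be the unique real root of 4x⁴ − 8x³ + 8x² − 8x + 3 in (0,1), let δ₀ be the unique real root of 12x⁴ − 32x³ + 24x² − 4x − 1 in (1,∞), and let α be the unique real root of 183x⁴ − 352x³ + 214x² − 40x − 1 in (0,1). Then α·(3c²δ₀(4δ₀ − 3) + c(−12δ₀² + 9δ₀ + 1) + 4δ₀² − 2δ₀ − 1) = δ₀·(c²(8δ₀² − 4δ₀ − 1) + c(−8δ₀² + 4δ₀ + 2) + 2δ₀² − 1). -/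
set_option maxHeartbeats 1000000



private lemma cubic_factor_pos (a b : ℝ) (ha9 : (0.9:ℝ) < a) (ha1 : a < 1)
    (hb1 : (0.90:ℝ) < b) (hb2 : b < 0.92) :
    0 < 183*(a^3 + a^2*b + a*b^2 + b^3) - 352*(a^2 + a*b + b^2) + 214*(a + b) - 40 := by
  nlinarith [mul_pos (sub_pos.mpr ha9) (sub_pos.mpr hb1),
    mul_pos (sub_pos.mpr ha1) (sub_pos.mpr hb2),
    mul_pos (sub_pos.mpr ha9) (sub_pos.mpr hb2),
    mul_pos (sub_pos.mpr ha1) (sub_pos.mpr hb1)]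

/-- The optimized parameters `c`, `δ₀`, `α` (unique roots of the given quartics in the
given intervals) satisfy the second equation of the nonlinear optimization system. -/
theorem second_optimality_equation (c δ₀ α : ℝ)
    (hc : 0 < c ∧ c < 1 ∧ 4 * c ^ 4 - 8 * c ^ 3 + 8 * c ^ 2 - 8 * c + 3 = 0)
    (hδ : 1 < δ₀ ∧ 12 * δ₀ ^ 4 - 32 * δ₀ ^ 3 + 24 * δ₀ ^ 2 - 4 * δ₀ - 1 = 0)
    (hα : 0 < α ∧ α < 1 ∧ 183 * α ^ 4 - 352 * α ^ 3 + 214 * α ^ 2 - 40 * α - 1 = 0) :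
    α * (3 * c ^ 2 * δ₀ * (4 * δ₀ - 3) + c * (-12 * δ₀ ^ 2 + 9 * δ₀ + 1)
        + 4 * δ₀ ^ 2 - 2 * δ₀ - 1)
      = δ₀ * (c ^ 2 * (8 * δ₀ ^ 2 - 4 * δ₀ - 1) + c * (-8 * δ₀ ^ 2 + 4 * δ₀ + 2)
        + 2 * δ₀ ^ 2 - 1) := by
  obtain ⟨hc0, hc1, hc4⟩ := hc
  obtain ⟨hd1, hd4⟩ := hδ
  obtain ⟨ha0, ha1, ha4⟩ := hα
  -- bounds on c
  have hcl : (0.56 : ℝ) < c := by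
    nlinarith [sq_nonneg (c - 0.56), sq_nonneg c, sq_nonneg (c - 1),
      mul_pos hc0 (sub_pos.mpr hc1), sq_nonneg (c - 0.5)]
  have hcu : c < 0.57 := by
    nlinarith [sq_nonneg (c - 0.57), sq_nonneg c, sq_nonneg (c - 1),
      mul_pos hc0 (sub_pos.mpr hc1), sq_nonneg (c - 0.5)]
  -- bounds on δ₀
  have hdl : (1.4 : ℝ) < δ₀ := by
    by_contra h
    push_neg at h
    have h1 : (0:ℝ) ≤ δ₀ - 1 := by linarith
    have h2 : (0:ℝ) ≤ 1.4 - δ₀ := by linarith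
    nlinarith [mul_nonneg h1 h2, mul_nonneg (mul_nonneg h1 h1) h2,
      mul_nonneg (mul_nonneg h1 h2) h2, sq_nonneg (δ₀ - 1.2)]
  have hdu : δ₀ < 1.7 := by
    by_contra h
    push_neg at h
    have h1 : (0:ℝ) ≤ δ₀ - 1.7 := by linarith
    nlinarith [mul_nonneg (mul_nonneg h1 h1) h1, sq_nonneg (δ₀ - 1.7),
      mul_nonneg (mul_nonneg (mul_nonneg h1 h1) h1) h1]
  -- δ₀ equals the explicit cubic expression in c
  have hE4 : 12 * ((13 - 10*c + 10*c^2 - 8*c^3)/6) ^ 4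
      - 32 * ((13 - 10*c + 10*c^2 - 8*c^3)/6) ^ 3
      + 24 * ((13 - 10*c + 10*c^2 - 8*c^3)/6) ^ 2
      - 4 * ((13 - 10*c + 10*c^2 - 8*c^3)/6) - 1 = 0 := by
    linear_combination ((256/27) * c^8 + (-256/9) * c^7 + (544/9) * c^6 + (-880/9) * c^5
      + (3073/27) * c^4 + (-2954/27) * c^3 + (2090/27) * c^2 + (-352/9) * c
      + (1511/108)) * hc4
  have hEl : (1.51 : ℝ) < (13 - 10*c + 10*c^2 - 8*c^3)/6 := by nlinarith [sq_nonneg c]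
  have hEu : (13 - 10*c + 10*c^2 - 8*c^3)/6 < 1.53 := by nlinarith [sq_nonneg c]
  have heq : δ₀ = (13 - 10*c + 10*c^2 - 8*c^3)/6 := by
    set E : ℝ := (13 - 10*c + 10*c^2 - 8*c^3)/6 with hEdef
    have key : (δ₀ - E) * (12*(δ₀^3 + δ₀^2*E + δ₀*E^2 + E^3)
        - 32*(δ₀^2 + δ₀*E + E^2) + 24*(δ₀ + E) - 4) = 0 := by
      linear_combination hd4 - hE4
    have hpos : 0 < 12*(δ₀^3 + δ₀^2*E + δ₀*E^2 + E^3)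
        - 32*(δ₀^2 + δ₀*E + E^2) + 24*(δ₀ + E) - 4 := by
      nlinarith [mul_pos (sub_pos.mpr hdl) (sub_pos.mpr hEl),
        mul_pos (sub_pos.mpr hdu) (sub_pos.mpr hEu),
        mul_pos (sub_pos.mpr hdl) (sub_pos.mpr hEu),
        mul_pos (sub_pos.mpr hdu) (sub_pos.mpr hEl),
        sq_nonneg (δ₀ - E), sq_nonneg (δ₀ + E - 3)]
    rcases mul_eq_zero.mp key with h | h
    · linarith
    · linarith
  -- α equals the explicit cubic expression in c
  have hB4 : 183 * ((229 - 154*c + 148*c^2 - 128*c^3)/183) ^ 4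
      - 352 * ((229 - 154*c + 148*c^2 - 128*c^3)/183) ^ 3
      + 214 * ((229 - 154*c + 148*c^2 - 128*c^3)/183) ^ 2
      - 40 * ((229 - 154*c + 148*c^2 - 128*c^3)/183) - 1 = 0 := by
    linear_combination ((67108864/6128487) * c^8 + (-58720256/2042829) * c^7
      + (124911616/2042829) * c^6 + (-66101248/680943) * c^5 + (681864256/6128487) * c^4
      + (-10904576/100467) * c^3 + (465621536/6128487) * c^2 + (-80227904/2042829) * c
      + (87900356/6128487)) * hc4
  have hBl : (0.90 : ℝ) < (229 - 154*c + 148*c^2 - 128*c^3)/183 := by nlinarith [sq_nonneg c]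
  have hBu : (229 - 154*c + 148*c^2 - 128*c^3)/183 < 0.92 := by nlinarith [sq_nonneg c]
  have hal : (0.6 : ℝ) < α := by
    by_contra h
    push_neg at h
    have h1 : (0:ℝ) ≤ 0.6 - α := by linarith
    nlinarith [mul_nonneg ha0.le h1, sq_nonneg (α - 0.15), sq_nonneg (α - 0.52),
      mul_nonneg (mul_nonneg ha0.le h1) (sq_nonneg (α - 0.52)),
      mul_nonneg (mul_nonneg ha0.le h1) (sq_nonneg (α - 0.15)), sq_nonneg (α - 0.3)]
  have hal9 : (0.9 : ℝ) < α := by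
    by_contra h
    push_neg at h
    have h1 : (0:ℝ) ≤ α - 0.6 := by linarith
    have h2 : (0:ℝ) ≤ 0.9 - α := by linarith
    nlinarith [mul_nonneg h1 h2, mul_nonneg (mul_nonneg h1 h1) h2,
      mul_nonneg (mul_nonneg h1 h2) h2, sq_nonneg (α - 0.75),
      mul_nonneg (mul_nonneg (mul_nonneg h1 h1) h2) h2]
  have haeq : α = (229 - 154*c + 148*c^2 - 128*c^3)/183 := by
    set B : ℝ := (229 - 154*c + 148*c^2 - 128*c^3)/183 with hBdef
    have key : (α - B) * (183*(α^3 + α^2*B + α*B^2 + B^3)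
        - 352*(α^2 + α*B + B^2) + 214*(α + B) - 40) = 0 := by
      linear_combination ha4 - hB4
    have hpos := cubic_factor_pos α B hal9 ha1 hBl hBu
    rcases mul_eq_zero.mp key with h | h
    · linarith
    · linarith
  rw [heq, haeq]
  linear_combination ((1664/1647) * c^7 + (-5152/1647) * c^6 + (328/61) * c^5
    + (-13798/1647) * c^4 + (4532/549) * c^3 + (-19889/3294) * c^2 + (2159/549) * c
    + (-2969/6588)) * hc4
end

section
/- Let c be the unique real root of 4x⁴ − 8x³ + 8x² − 8x + 3 in (0,1), let δ₀ be the unique real root of 12x⁴ − 32x³ + 24x² − 4x − 1 in (1,∞), and let α be the unique real root of 183x⁴ − 352x³ + 214x² − 40x − 1 in (0,1). Define N(t) := −α(3c²δ₀(4δ₀−3) + c(−12δ₀² + 9δ₀ + 1) + 4δ₀² − 2δ₀ − 1) + δ₀(c²(8δ₀² − 4δ₀ − 1) + c(−8δ₀² + 4δ₀ + 2) + 2δ₀² − 1) + (1−c)(α + αc(δ₀−2) + (c−1)δ₀)·t. Then N(t) = 0 for every real t. -/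
private lemma c_bounds (c : ℝ) (h0 : 0 < c) (h1 : c < 1)
    (h : 4 * c ^ 4 - 8 * c ^ 3 + 8 * c ^ 2 - 8 * c + 3 = 0) : 11/20 < c ∧ c < 3/5 := by
  constructor
  · nlinarith [sq_nonneg c, sq_nonneg (c-1/2), sq_nonneg (c^2-c), sq_nonneg (c-11/20), sq_nonneg (c^2 - 1/4)]
  · nlinarith [sq_nonneg c, sq_nonneg (c-1), sq_nonneg (c^2-c), sq_nonneg (c-3/5), sq_nonneg (c^2-1)]

private lemma d_lb (d : ℝ) (h1 : 1 < d) (h : 12*d^4 - 32*d^3 + 24*d^2 - 4*d - 1 = 0) : 7/5 < d := by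
  by_contra hle
  push_neg at hle
  nlinarith [sq_nonneg (d-1), sq_nonneg (d-7/5), mul_nonneg (sub_nonneg.2 h1.le) (sub_nonneg.2 hle),
    mul_nonneg (mul_nonneg (sub_nonneg.2 h1.le) (sub_nonneg.2 h1.le)) (sub_nonneg.2 hle),
    mul_nonneg (mul_nonneg (sub_nonneg.2 h1.le) (sub_nonneg.2 hle)) (sub_nonneg.2 hle)]

private lemma a_lb (a : ℝ) (h0 : 0 < a) (h : 183*a^4 - 352*a^3 + 214*a^2 - 40*a - 1 = 0) : 17/20 < a := by
  by_contra hle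
  push_neg at hle
  rcases le_or_gt a (1/2) with h2 | h2
  · nlinarith [sq_nonneg (a-1/2), sq_nonneg (a*(a-1/2)), mul_nonneg h0.le (sub_nonneg.2 h2),
      mul_nonneg (mul_nonneg h0.le h0.le) (sub_nonneg.2 h2), sq_nonneg a,
      mul_nonneg (mul_nonneg h0.le (sub_nonneg.2 h2)) (sub_nonneg.2 h2)]
  · nlinarith [sq_nonneg (a-1/2), sq_nonneg (a-17/20), mul_nonneg (sub_nonneg.2 h2.le) (sub_nonneg.2 hle),
      mul_nonneg (mul_nonneg (sub_nonneg.2 h2.le) (sub_nonneg.2 h2.le)) (sub_nonneg.2 hle),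
      mul_nonneg (mul_nonneg (sub_nonneg.2 h2.le) (sub_nonneg.2 hle)) (sub_nonneg.2 hle),
      sq_nonneg ((a-1/2)*(a-17/20))]

private lemma Sd_pos (u v : ℝ) (hu : 7/5 < u) (hv : 7/5 < v) :
    0 < 12*(u^3+u^2*v+u*v^2+v^3) - 32*(u^2+u*v+v^2) + 24*(u+v) - 4 := by
  nlinarith [mul_pos (sub_pos.2 hu) (sub_pos.2 hv), sq_nonneg (u-v), sq_nonneg (u+v-14/5),
    mul_pos (mul_pos (sub_pos.2 hu) (sub_pos.2 hu)) (sub_pos.2 hu),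
    mul_pos (mul_pos (sub_pos.2 hv) (sub_pos.2 hv)) (sub_pos.2 hv),
    mul_pos (mul_pos (sub_pos.2 hu) (sub_pos.2 hu)) (sub_pos.2 hv),
    mul_pos (mul_pos (sub_pos.2 hu) (sub_pos.2 hv)) (sub_pos.2 hv)]

private lemma Sa_pos (u v : ℝ) (hu : 17/20 < u) (hv : 17/20 < v) :
    0 < 183*(u^3+u^2*v+u*v^2+v^3) - 352*(u^2+u*v+v^2) + 214*(u+v) - 40 := by
  nlinarith [mul_pos (sub_pos.2 hu) (sub_pos.2 hv), sq_nonneg (u-v), sq_nonneg (u+v-17/10),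
    mul_pos (mul_pos (sub_pos.2 hu) (sub_pos.2 hu)) (sub_pos.2 hu),
    mul_pos (mul_pos (sub_pos.2 hv) (sub_pos.2 hv)) (sub_pos.2 hv),
    mul_pos (mul_pos (sub_pos.2 hu) (sub_pos.2 hu)) (sub_pos.2 hv),
    mul_pos (mul_pos (sub_pos.2 hu) (sub_pos.2 hv)) (sub_pos.2 hv)]

/-- With the optimized parameters `c`, `δ₀`, `α`, the numerator `N(t)` of the half-sum
`c₁` of the nonzero eigenvalues of the Fourier-transformed two-level error operator
vanishes identically in `t`. -/
theorem numerator_c1_vanishes (c δ₀ α : ℝ)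
    (hc : 0 < c ∧ c < 1 ∧ 4 * c ^ 4 - 8 * c ^ 3 + 8 * c ^ 2 - 8 * c + 3 = 0)
    (hδ : 1 < δ₀ ∧ 12 * δ₀ ^ 4 - 32 * δ₀ ^ 3 + 24 * δ₀ ^ 2 - 4 * δ₀ - 1 = 0)
    (hα : 0 < α ∧ α < 1 ∧ 183 * α ^ 4 - 352 * α ^ 3 + 214 * α ^ 2 - 40 * α - 1 = 0) :
    ∀ t : ℝ,
      -α * (3 * c ^ 2 * δ₀ * (4 * δ₀ - 3) + c * (-12 * δ₀ ^ 2 + 9 * δ₀ + 1)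
          + 4 * δ₀ ^ 2 - 2 * δ₀ - 1)
        + δ₀ * (c ^ 2 * (8 * δ₀ ^ 2 - 4 * δ₀ - 1) + c * (-8 * δ₀ ^ 2 + 4 * δ₀ + 2)
          + 2 * δ₀ ^ 2 - 1)
        + (1 - c) * (α + α * c * (δ₀ - 2) + (c - 1) * δ₀) * t = 0 := by
  obtain ⟨hc0, hc1, hcp⟩ := hc
  obtain ⟨hd1, hdp⟩ := hδ
  obtain ⟨ha0, ha1, hap⟩ := hα
  obtain ⟨hcl, hcr⟩ := c_bounds c hc0 hc1 hcp
  -- the rational expressions for δ₀ and α in terms of c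
  set f : ℝ := (13 - 10*c + 10*c^2 - 8*c^3)/6 with hf_def
  set g : ℝ := (229 - 154*c + 148*c^2 - 128*c^3)/183 with hg_def
  have hfroot : 12*f^4 - 32*f^3 + 24*f^2 - 4*f - 1 = 0 := by
    rw [hf_def]
    linear_combination (1511/108 - 352/9*c + 2090/27*c^2 - 2954/27*c^3 + 3073/27*c^4
      - 880/9*c^5 + 544/9*c^6 - 256/9*c^7 + 256/27*c^8) * hcp
  have hgroot : 183*g^4 - 352*g^3 + 214*g^2 - 40*g - 1 = 0 := by
    rw [hg_def]
    linear_combination (87900356/6128487 - 80227904/2042829*c + 465621536/6128487*c^2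
      - 10904576/100467*c^3 + 681864256/6128487*c^4 - 66101248/680943*c^5
      + 124911616/2042829*c^6 - 58720256/2042829*c^7 + 67108864/6128487*c^8) * hcp
  have hf5 : 7/5 < f := by
    rw [hf_def, lt_div_iff₀ (by norm_num : (0:ℝ) < 6)]
    nlinarith [sq_nonneg (c-11/20), sq_nonneg (c-3/5), mul_pos (sub_pos.2 hcl) (sub_pos.2 hcr)]
  have hg5 : 17/20 < g := by
    rw [hg_def, lt_div_iff₀ (by norm_num : (0:ℝ) < 183)]
    nlinarith [sq_nonneg (c-11/20), sq_nonneg (c-3/5), mul_pos (sub_pos.2 hcl) (sub_pos.2 hcr)]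
  have hd5 : 7/5 < δ₀ := d_lb δ₀ hd1 (by linarith [hdp])
  have ha5 : 17/20 < α := a_lb α ha0 (by linarith [hap])
  -- δ₀ = f
  have hdeq : δ₀ = f := by
    have hz : (δ₀ - f) * (12*(δ₀^3+δ₀^2*f+δ₀*f^2+f^3) - 32*(δ₀^2+δ₀*f+f^2) + 24*(δ₀+f) - 4) = 0 := by
      linear_combination hdp - hfroot
    have hS := Sd_pos δ₀ f hd5 hf5
    have := mul_eq_zero.1 hz
    rcases this with h | h
    · linarith
    · linarith
  -- α = g
  have haeq : α = g := by
    have hz : (α - g) * (183*(α^3+α^2*g+α*g^2+g^3) - 352*(α^2+α*g+g^2) + 214*(α+g) - 40) = 0 := by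
      linear_combination hap - hgroot
    have hS := Sa_pos α g ha5 hg5
    rcases mul_eq_zero.1 hz with h | h
    · linarith
    · linarith
  intro t
  rw [hdeq, haeq, hf_def, hg_def]
  linear_combination (2969/6588 - 2159/549*c + 19889/3294*c^2 - 4532/549*c^3 + 13798/1647*c^4
    - 328/61*c^5 + 5152/1647*c^6 - 1664/1647*c^7
    + (-335/1098 + 613/1098*c - 191/549*c^2 + 20/61*c^3 - 128/549*c^4) * t) * hcp
end

section
/- Let c be the unique real root of 4x⁴ − 8x³ + 8x² − 8x + 3 in (0,1), let δ₀ be the unique real root of 12x⁴ − 32x³ + 24x² − 4x − 1 in (1,∞), and let α be the unique real root of 183x⁴ − 352x³ + 214x² − 40x − 1 in (0,1). For φ ∈ ℝ define the 4×4 complex matrix Â(φ) as the block-diagonal matrix with two identical 2×2 blocks [[δ₀ − cos φ, 1 − δ₀],[1 − δ₀, δ₀ − cos φ]], R̂(φ) := (1/√2)·[[1+(c−1)e^{iφ}, −c·e^{iφ}, 1−(c−1)e^{iφ}, c·e^{iφ}],[c·e^{−iφ}, 1+(c−1)e^{−iφ}, c·e^{−iφ}, 1−(c−1)e^{−iφ}]],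 P̂(φ) := 2·R̂(φ)*, and Â₀(φ) := R̂(φ)Â(φ)P̂(φ). Then Â₀(φ) is invertible for every φ ∈ ℝ. -/
open Matrix Polynomial

/-- LFA symbol of the SIPG fine operator (mesh size `h = 1`, frequency `φ`). -/
noncomputable def Ahat (δ₀ φ : ℝ) : Matrix (Fin 4) (Fin 4) ℂ :=
  !![((δ₀ - Real.cos φ : ℝ) : ℂ), ((1 - δ₀ : ℝ) : ℂ), 0, 0;
     ((1 - δ₀ : ℝ) : ℂ), ((δ₀ - Real.cos φ : ℝ) : ℂ), 0, 0;
     0, 0, ((δ₀ - Real.cos φ : ℝ) : ℂ), ((1 - δ₀ : ℝ) : ℂ);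
     0, 0, ((1 - δ₀ : ℝ) : ℂ), ((δ₀ - Real.cos φ : ℝ) : ℂ)]

/-- LFA symbol of the restriction operator with discontinuity parameter `c`. -/
noncomputable def Rhat (c φ : ℝ) : Matrix (Fin 2) (Fin 4) ℂ :=
  (Real.sqrt 2)⁻¹ •
    !![1 + ((c : ℂ) - 1) * Complex.exp (Complex.I * (φ : ℂ)),
       -(c : ℂ) * Complex.exp (Complex.I * (φ : ℂ)),
       1 - ((c : ℂ) - 1) * Complex.exp (Complex.I * (φ : ℂ)),
       (c : ℂ) * Complex.exp (Complex.I * (φ : ℂ));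
       (c : ℂ) * Complex.exp (-(Complex.I * (φ : ℂ))),
       1 + ((c : ℂ) - 1) * Complex.exp (-(Complex.I * (φ : ℂ))),
       (c : ℂ) * Complex.exp (-(Complex.I * (φ : ℂ))),
       1 - ((c : ℂ) - 1) * Complex.exp (-(Complex.I * (φ : ℂ)))]

/-- LFA symbol of the prolongation operator: `P̂ = 2·R̂*`. -/
noncomputable def Phat (c φ : ℝ) : Matrix (Fin 4) (Fin 2) ℂ := (2 : ℂ) • (Rhat c φ)ᴴ

/-- LFA symbol of the Galerkin coarse operator `A₀ = R A P`. -/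
noncomputable def A0hat (c δ₀ φ : ℝ) : Matrix (Fin 2) (Fin 2) ℂ :=
  Rhat c φ * Ahat δ₀ φ * Phat c φ

lemma bounds_c' (c : ℝ) (h1 : 0 < c) (h2 : c < 1)
    (h3 : 4 * c ^ 4 - 8 * c ^ 3 + 8 * c ^ 2 - 8 * c + 3 = 0) :
    0.56 < c ∧ c < 0.57 := by
  constructor
  · by_contra h; push_neg at h
    nlinarith [sq_nonneg c, sq_nonneg (c-0.56), sq_nonneg (c*(c-0.56)), mul_pos h1 h1]
  · by_contra h; push_neg at h
    nlinarith [sq_nonneg (c-0.57), sq_nonneg (1-c), sq_nonneg (c*(1-c)), mul_pos (lt_of_lt_of_le (by norm_num : (0:ℝ)<0.57) h) (sub_pos.mpr h2)]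

lemma bounds_d' (d : ℝ) (h1 : 1 < d)
    (h3 : 12 * d ^ 4 - 32 * d ^ 3 + 24 * d ^ 2 - 4 * d - 1 = 0) :
    1.51 < d ∧ d < 1.52 := by
  constructor
  · by_contra h; push_neg at h
    nlinarith [sq_nonneg (d-1), sq_nonneg (d-1.51), sq_nonneg ((d-1)*(d-1.51)), sq_nonneg (d*(d-1.51))]
  · by_contra h; push_neg at h
    nlinarith [sq_nonneg (d-1.52), sq_nonneg ((d-1.52)*d), sq_nonneg (d-1), mul_nonneg (sub_nonneg.mpr h) (sub_nonneg.mpr h)]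

lemma Bpos0' (c d : ℝ) (hc1 : 0.56 < c) (hc2 : c < 0.57)
    (hd1 : 1.51 < d) (hd2 : d < 1.52) :
    0 < (16 : ℝ) * c^2 + (-32 : ℝ) * c^2 * d + (16 : ℝ) * c^2 * d^2 + (-32 : ℝ) * c^3 + (64 : ℝ) * c^3 * d + (-32 : ℝ) * c^3 * d^2 + (16 : ℝ) * c^4 + (-32 : ℝ) * c^4 * d + (16 : ℝ) * c^4 * d^2 := by
  nlinarith [mul_pos (sub_pos.mpr hc1) (sub_pos.mpr hc2), mul_pos (sub_pos.mpr hd1) (sub_pos.mpr hd2), sq_nonneg ((c-0.56)*(d-1.51)), sq_nonneg ((c-0.57)*(d-1.52)), mul_pos (mul_pos (sub_pos.mpr hc1) (sub_pos.mpr hc2)) (mul_pos (sub_pos.mpr hd1) (sub_pos.mpr hd2)), sq_nonneg (c*d), sq_nonneg (c-0.56), sq_nonneg (d-1.51)]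

lemma Bpos1' (c d : ℝ) (hc1 : 0.56 < c) (hc2 : c < 0.57)
    (hd1 : 1.51 < d) (hd2 : d < 1.52) :
    0 < (-32 : ℝ) * d + (32 : ℝ) * d^2 + (-32 : ℝ) * c + (128 : ℝ) * c * d + (-96 : ℝ) * c * d^2 + (-8 : ℝ) * c^2 + (-48 : ℝ) * c^2 * d + (56 : ℝ) * c^2 * d^2 + (64 : ℝ) * c^3 + (-80 : ℝ) * c^3 * d + (16 : ℝ) * c^3 * d^2 + (-32 : ℝ) * c^4 + (32 : ℝ) * c^4 * d := by
  nlinarith [mul_pos (sub_pos.mpr hc1) (sub_pos.mpr hc2), mul_pos (sub_pos.mpr hd1) (sub_pos.mpr hd2), sq_nonneg ((c-0.56)*(d-1.51)), sq_nonneg ((c-0.57)*(d-1.52)), mul_pos (mul_pos (sub_pos.mpr hc1) (sub_pos.mpr hc2)) (mul_pos (sub_pos.mpr hd1) (sub_pos.mpr hd2)), sq_nonneg (c*d), sq_nonneg (c-0.56), sq_nonneg (d-1.51)]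

lemma Bpos2' (c d : ℝ) (hc1 : 0.56 < c) (hc2 : c < 0.57)
    (hd1 : 1.51 < d) (hd2 : d < 1.52) :
    0 < (32 : ℝ) * d + (-16 : ℝ) * d^2 + (48 : ℝ) * c + (-128 : ℝ) * c * d + (48 : ℝ) * c * d^2 + (-48 : ℝ) * c^2 + (112 : ℝ) * c^2 * d + (-32 : ℝ) * c^2 * d^2 + (-8 : ℝ) * c^3 + (-8 : ℝ) * c^3 * d + (12 : ℝ) * c^4 := by
  nlinarith [mul_pos (sub_pos.mpr hc1) (sub_pos.mpr hc2), mul_pos (sub_pos.mpr hd1) (sub_pos.mpr hd2), sq_nonneg ((c-0.56)*(d-1.51)), sq_nonneg ((c-0.57)*(d-1.52)), mul_pos (mul_pos (sub_pos.mpr hc1) (sub_pos.mpr hc2)) (mul_pos (sub_pos.mpr hd1) (sub_pos.mpr hd2)), sq_nonneg (c*d), sq_nonneg (c-0.56), sq_nonneg (d-1.51)]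

lemma Bpos3' (c d : ℝ) (hc1 : 0.56 < c) (hc2 : c < 0.57)
    (hd1 : 1.51 < d) (hd2 : d < 1.52) :
    0 < (-16 : ℝ) * c + (16 : ℝ) * c * d + (24 : ℝ) * c^2 + (-16 : ℝ) * c^2 * d + (-8 : ℝ) * c^3 := by
  nlinarith [mul_pos (sub_pos.mpr hc1) (sub_pos.mpr hc2), mul_pos (sub_pos.mpr hd1) (sub_pos.mpr hd2), sq_nonneg ((c-0.56)*(d-1.51)), sq_nonneg ((c-0.57)*(d-1.52)), mul_pos (mul_pos (sub_pos.mpr hc1) (sub_pos.mpr hc2)) (mul_pos (sub_pos.mpr hd1) (sub_pos.mpr hd2)), sq_nonneg (c*d), sq_nonneg (c-0.56), sq_nonneg (d-1.51)]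

lemma Gpos' (c d x : ℝ) (hc1 : 0.56 < c) (hc2 : c < 0.57)
    (hd1 : 1.51 < d) (hd2 : d < 1.52) (hx1 : -1 ≤ x) (hx2 : x ≤ 1) :
    0 < (-32 : ℝ) * d * x + (32 : ℝ) * d * x^2 + (16 : ℝ) * d^2 + (-16 : ℝ) * d^2 * x^2 + (-16 : ℝ) * c * x + (16 : ℝ) * c * x^3 + (16 : ℝ) * c * d + (80 : ℝ) * c * d * x + (-80 : ℝ) * c * d * x^2 + (-16 : ℝ) * c * d * x^3 + (-48 : ℝ) * c * d^2 + (48 : ℝ) * c * d^2 * x^2 + (-16 : ℝ) * c^2 + (32 : ℝ) * c^2 * x + (24 : ℝ) * c^2 * x^2 + (-24 : ℝ) * c^2 * x^3 + (16 : ℝ) * c^2 * d + (-128 : ℝ) * c^2 * d * x + (64 : ℝ) * c^2 * d * x^2 + (16 : ℝ) * c^2 * d * x^3 + (40 : ℝ) * c^2 * d^2 + (8 : ℝ) * c^2 * d^2 * x + (-32 : ℝ) * c^2 * d^2 * x^2 + (16 : ℝ) * c^3 + (-24 : ℝ) * c^3 * x + (-32 : ℝ) * c^3 * x^2 + (8 :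 ℝ) * c^3 * x^3 + (-24 : ℝ) * c^3 * d + (96 : ℝ) * c^3 * d * x + (-8 : ℝ) * c^3 * d * x^2 + (-16 : ℝ) * c^3 * d^2 + (-16 : ℝ) * c^3 * d^2 * x + (-4 : ℝ) * c^4 + (8 : ℝ) * c^4 * x + (12 : ℝ) * c^4 * x^2 + (-32 : ℝ) * c^4 * d * x + (16 : ℝ) * c^4 * d^2 := by
  have h0 := Bpos0' c d hc1 hc2 hd1 hd2
  have h1 := Bpos1' c d hc1 hc2 hd1 hd2
  have h2 := Bpos2' c d hc1 hc2 hd1 hd2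
  have h3 := Bpos3' c d hc1 hc2 hd1 hd2
  have hu : 0 ≤ 1 - x := by linarith
  nlinarith [mul_nonneg (mul_nonneg hu hu) hu, mul_nonneg hu hu, mul_nonneg h1.le hu, mul_nonneg h2.le (mul_nonneg hu hu), mul_nonneg h3.le (mul_nonneg (mul_nonneg hu hu) hu)]
set_option maxRecDepth 10000
set_option maxHeartbeats 1600000

/-- With the optimized parameters `c`, `δ₀`, `α`, the LFA symbol `Â₀(φ)` of the Galerkin
coarse operator is invertible for every frequency `φ`. -/
theorem coarse_symbol_invertible (c δ₀ α : ℝ)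
    (hc : 0 < c ∧ c < 1 ∧ 4 * c ^ 4 - 8 * c ^ 3 + 8 * c ^ 2 - 8 * c + 3 = 0)
    (hδ : 1 < δ₀ ∧ 12 * δ₀ ^ 4 - 32 * δ₀ ^ 3 + 24 * δ₀ ^ 2 - 4 * δ₀ - 1 = 0)
    (hα : 0 < α ∧ α < 1 ∧ 183 * α ^ 4 - 352 * α ^ 3 + 214 * α ^ 2 - 40 * α - 1 = 0) :
    ∀ φ : ℝ, IsUnit (A0hat c δ₀ φ) := by
  intro φ
  rw [Matrix.isUnit_iff_isUnit_det, isUnit_iff_ne_zero]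
  have hEE : Complex.exp (Complex.I * (φ:ℂ)) * Complex.exp (-(Complex.I * (φ:ℂ))) = 1 := by
    rw [← Complex.exp_add]; simp
  have hcos : Complex.exp (Complex.I * (φ:ℂ)) + Complex.exp (-(Complex.I * (φ:ℂ))) = 2 * (Real.cos φ : ℂ) := by
    rw [Complex.ofReal_cos, Complex.two_cos, mul_comm Complex.I (φ:ℂ), neg_mul]
  have hs : (((Real.sqrt 2 : ℝ)) : ℂ)⁻¹^2 = (2 : ℂ)⁻¹ := by
    rw [← Complex.ofReal_inv, ← Complex.ofReal_pow]
    norm_num [Real.sq_sqrt]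
  have hdet : (A0hat c δ₀ φ).det = ((-32 : ℂ) * (δ₀ : ℂ) * (Real.cos φ : ℂ) + (32 : ℂ) * (δ₀ : ℂ) * (Real.cos φ : ℂ)^2 + (16 : ℂ) * (δ₀ : ℂ)^2 + (-16 : ℂ) * (δ₀ : ℂ)^2 * (Real.cos φ : ℂ)^2 + (-16 : ℂ) * (c : ℂ) * (Real.cos φ : ℂ) + (16 : ℂ) * (c : ℂ) * (Real.cos φ : ℂ)^3 + (16 : ℂ) * (c : ℂ) * (δ₀ : ℂ) + (80 : ℂ) * (c : ℂ) * (δ₀ : ℂ) * (Real.cos φ : ℂ) + (-80 : ℂ) * (c : ℂ) * (δ₀ : ℂ) * (Real.cos φ : ℂ)^2 + (-16 : ℂ) * (c : ℂ) * (δ₀ : ℂ) * (Real.cos φ : ℂ)^3 + (-48 : ℂ) * (c : ℂ) * (δ₀ : ℂ)^2 + (48 : ℂ) * (c : ℂ) * (δ₀ : ℂ)^2 * (Real.cos φ : ℂ)^2 + (-16 : ℂ) * (c : ℂ)^2 + (32 : ℂ) * (c : ℂ)^2 * (Real.cos φ : ℂ) + (24 : ℂ) * (c : ℂ)^2 * (Real.cos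 φ : ℂ)^2 + (-24 : ℂ) * (c : ℂ)^2 * (Real.cos φ : ℂ)^3 + (16 : ℂ) * (c : ℂ)^2 * (δ₀ : ℂ) + (-128 : ℂ) * (c : ℂ)^2 * (δ₀ : ℂ) * (Real.cos φ : ℂ) + (64 : ℂ) * (c : ℂ)^2 * (δ₀ : ℂ) * (Real.cos φ : ℂ)^2 + (16 : ℂ) * (c : ℂ)^2 * (δ₀ : ℂ) * (Real.cos φ : ℂ)^3 + (40 : ℂ) * (c : ℂ)^2 * (δ₀ : ℂ)^2 + (8 : ℂ) * (c : ℂ)^2 * (δ₀ : ℂ)^2 * (Real.cos φ : ℂ) + (-32 : ℂ) * (c : ℂ)^2 * (δ₀ : ℂ)^2 * (Real.cos φ : ℂ)^2 + (16 : ℂ) * (c : ℂ)^3 + (-24 : ℂ) * (c : ℂ)^3 * (Real.cos φ : ℂ) + (-32 : ℂ) * (c : ℂ)^3 * (Real.cos φ : ℂ)^2 + (8 : ℂ) * (c : ℂ)^3 * (Real.cos φ : ℂ)^3 + (-24 : ℂ) * (c : ℂ)^3 * (δ₀ : ℂ) + (96 : ℂ) * (c : ℂ)^3 * (δ₀ :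 ℂ) * (Real.cos φ : ℂ) + (-8 : ℂ) * (c : ℂ)^3 * (δ₀ : ℂ) * (Real.cos φ : ℂ)^2 + (-16 : ℂ) * (c : ℂ)^3 * (δ₀ : ℂ)^2 + (-16 : ℂ) * (c : ℂ)^3 * (δ₀ : ℂ)^2 * (Real.cos φ : ℂ) + (-4 : ℂ) * (c : ℂ)^4 + (8 : ℂ) * (c : ℂ)^4 * (Real.cos φ : ℂ) + (12 : ℂ) * (c : ℂ)^4 * (Real.cos φ : ℂ)^2 + (-32 : ℂ) * (c : ℂ)^4 * (δ₀ : ℂ) * (Real.cos φ : ℂ) + (16 : ℂ) * (c : ℂ)^4 * (δ₀ : ℂ)^2) := by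
    rw [Matrix.det_fin_two]
    simp only [A0hat, Matrix.mul_apply, Fin.sum_univ_four]
    simp only [Rhat, Phat, Ahat, Matrix.of_apply, Matrix.conjTranspose_apply, Matrix.smul_apply,
      Matrix.cons_val', Matrix.cons_val_zero, Matrix.cons_val_one, Matrix.head_cons,
      Matrix.head_fin_const, Matrix.empty_val', Matrix.cons_val_fin_one,
      Matrix.cons_val_two, Matrix.cons_val_three, Matrix.tail_cons]
    simp only [smul_eq_mul, Complex.real_smul, Complex.ofReal_inv]
    simp only [star_smul, star_trivial, star_add, star_sub, star_mul', star_one, star_neg,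
      Complex.star_def, ← Complex.exp_conj, _root_.map_mul, _root_.map_neg, map_inv₀, Complex.conj_I,
      Complex.conj_ofReal, Complex.ofReal_sub, Complex.ofReal_one, neg_mul, neg_neg]
    set E : ℂ := Complex.exp (Complex.I * (φ:ℂ)) with hE
    set Eb : ℂ := Complex.exp (-(Complex.I * (φ:ℂ))) with hEb
    linear_combination ((4 : ℂ) * ((-4 : ℂ) + (-4 : ℂ) *Eb^2 + (-4 : ℂ) * E^2 + (-4 : ℂ) * E^2 *Eb^2 + (4 : ℂ) * (Real.cos φ : ℂ)^2 + (8 : ℂ) * (Real.cos φ : ℂ)^2 * E *Eb + (4 : ℂ) * (Real.cos φ : ℂ)^2 * E^2 *Eb^2 + (8 : ℂ) * (δ₀ : ℂ) + (8 : ℂ) * (δ₀ : ℂ) *Eb^2 + (8 : ℂ) * (δ₀ : ℂ) * E^2 + (8 : ℂ) * (δ₀ : ℂ) * E^2 *Eb^2 + (-8 : ℂ) * (δ₀ : ℂ) * (Real.cos φ : ℂ) + (-16 : ℂ) * (δ₀ : ℂ) * (Real.cos φ : ℂ) * E *Eb + (-8 : ℂ) * (δ₀ : ℂ) * (Real.cos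 φ : ℂ) * E^2 *Eb^2 + (-4 : ℂ) * (δ₀ : ℂ)^2 *Eb^2 + (8 : ℂ) * (δ₀ : ℂ)^2 * E *Eb + (-4 : ℂ) * (δ₀ : ℂ)^2 * E^2 + (8 : ℂ) * (c : ℂ) *Eb^2 + (8 : ℂ) * (c : ℂ) * E^2 + (16 : ℂ) * (c : ℂ) * E^2 *Eb^2 + (4 : ℂ) * (c : ℂ) * (Real.cos φ : ℂ) *Eb^2 + (-8 : ℂ) * (c : ℂ) * (Real.cos φ : ℂ) * E *Eb + (4 : ℂ) * (c : ℂ) * (Real.cos φ : ℂ) * E^2 + (-16 : ℂ) * (c : ℂ) * (Real.cos φ : ℂ)^2 * E *Eb + (-16 : ℂ) * (c : ℂ) * (Real.cos φ : ℂ)^2 * E^2 *Eb^2 + (-20 : ℂ) * (c : ℂ) * (δ₀ : ℂ) *Eb^2 + (8 : ℂ) * (c : ℂ) * (δ₀ : ℂ) * E *Eb + (-20 : ℂ) * (c : ℂ) * (δ₀ : ℂ) * E^2 + (-32 : ℂ) * (c : ℂ) * (δ₀ : ℂ) * E^2 *Eb^2 + (-4 : ℂ) * (c : ℂ) * (δ₀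 : ℂ) * (Real.cos φ : ℂ) *Eb^2 + (40 : ℂ) * (c : ℂ) * (δ₀ : ℂ) * (Real.cos φ : ℂ) * E *Eb + (-4 : ℂ) * (c : ℂ) * (δ₀ : ℂ) * (Real.cos φ : ℂ) * E^2 + (32 : ℂ) * (c : ℂ) * (δ₀ : ℂ) * (Real.cos φ : ℂ) * E^2 *Eb^2 + (12 : ℂ) * (c : ℂ) * (δ₀ : ℂ)^2 *Eb^2 + (-24 : ℂ) * (c : ℂ) * (δ₀ : ℂ)^2 * E *Eb + (12 : ℂ) * (c : ℂ) * (δ₀ : ℂ)^2 * E^2 + (-4 : ℂ) * (c : ℂ)^2 *Eb^2 + (8 : ℂ) * (c : ℂ)^2 * E *Eb^2 + (-4 : ℂ) * (c : ℂ)^2 * E^2 + (8 : ℂ) * (c : ℂ)^2 * E^2 *Eb + (-24 : ℂ) * (c : ℂ)^2 * E^2 *Eb^2 + (-4 : ℂ) * (c : ℂ)^2 * (Real.cos φ : ℂ) *Eb^2 + (8 : ℂ) * (c : ℂ)^2 * (Real.cos φ : ℂ) * E *Eb + (-4 : ℂ) * (c : ℂ)^2 * (Real.cos φ : ℂ) *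 E^2 + (12 : ℂ) * (c : ℂ)^2 * (Real.cos φ : ℂ)^2 * E *Eb + (-4 : ℂ) * (c : ℂ)^2 * (Real.cos φ : ℂ)^2 * E *Eb^2 + (-4 : ℂ) * (c : ℂ)^2 * (Real.cos φ : ℂ)^2 * E^2 *Eb + (28 : ℂ) * (c : ℂ)^2 * (Real.cos φ : ℂ)^2 * E^2 *Eb^2 + (12 : ℂ) * (c : ℂ)^2 * (δ₀ : ℂ) *Eb^2 + (-8 : ℂ) * (c : ℂ)^2 * (δ₀ : ℂ) * E *Eb + (-16 : ℂ) * (c : ℂ)^2 * (δ₀ : ℂ) * E *Eb^2 + (12 : ℂ) * (c : ℂ)^2 * (δ₀ : ℂ) * E^2 + (-16 : ℂ) * (c : ℂ)^2 * (δ₀ : ℂ) * E^2 *Eb + (48 : ℂ) * (c : ℂ)^2 * (δ₀ : ℂ) * E^2 *Eb^2 + (4 : ℂ) * (c : ℂ)^2 * (δ₀ : ℂ) * (Real.cos φ : ℂ) *Eb^2 + (-32 : ℂ) * (c : ℂ)^2 * (δ₀ : ℂ) * (Real.cos φ : ℂ) * E *Eb + (8 : ℂ) * (c : ℂ)^2 *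 (δ₀ : ℂ) * (Real.cos φ : ℂ) * E *Eb^2 + (4 : ℂ) * (c : ℂ)^2 * (δ₀ : ℂ) * (Real.cos φ : ℂ) * E^2 + (8 : ℂ) * (c : ℂ)^2 * (δ₀ : ℂ) * (Real.cos φ : ℂ) * E^2 *Eb + (-56 : ℂ) * (c : ℂ)^2 * (δ₀ : ℂ) * (Real.cos φ : ℂ) * E^2 *Eb^2 + (-8 : ℂ) * (c : ℂ)^2 * (δ₀ : ℂ)^2 *Eb^2 + (20 : ℂ) * (c : ℂ)^2 * (δ₀ : ℂ)^2 * E *Eb + (4 : ℂ) * (c : ℂ)^2 * (δ₀ : ℂ)^2 * E *Eb^2 + (-8 : ℂ) * (c : ℂ)^2 * (δ₀ : ℂ)^2 * E^2 + (4 : ℂ) * (c : ℂ)^2 * (δ₀ : ℂ)^2 * E^2 *Eb + (4 : ℂ) * (c : ℂ)^2 * (δ₀ : ℂ)^2 * E^2 *Eb^2 + (-8 : ℂ) * (c : ℂ)^3 * E *Eb^2 + (-8 : ℂ) * (c : ℂ)^3 * E^2 *Eb + (16 : ℂ) * (c : ℂ)^3 * E^2 *Eb^2 + (-4 : ℂ)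 * (c : ℂ)^3 * (Real.cos φ : ℂ) * E *Eb^2 + (-4 : ℂ) * (c : ℂ)^3 * (Real.cos φ : ℂ) * E^2 *Eb + (-8 : ℂ) * (c : ℂ)^3 * (Real.cos φ : ℂ) * E^2 *Eb^2 + (4 : ℂ) * (c : ℂ)^3 * (Real.cos φ : ℂ)^2 * E *Eb^2 + (4 : ℂ) * (c : ℂ)^3 * (Real.cos φ : ℂ)^2 * E^2 *Eb + (-24 : ℂ) * (c : ℂ)^3 * (Real.cos φ : ℂ)^2 * E^2 *Eb^2 + (20 : ℂ) * (c : ℂ)^3 * (δ₀ : ℂ) * E *Eb^2 + (20 : ℂ) * (c : ℂ)^3 * (δ₀ : ℂ) * E^2 *Eb + (-24 : ℂ) * (c : ℂ)^3 * (δ₀ : ℂ) * E^2 *Eb^2 + (-4 : ℂ) * (c : ℂ)^3 * (δ₀ : ℂ) * (Real.cos φ : ℂ) * E *Eb^2 + (-4 : ℂ) * (c : ℂ)^3 * (δ₀ : ℂ) * (Real.cos φ : ℂ) * E^2 *Eb + (56 : ℂ) * (c : ℂ)^3 * (δ₀ : ℂ) * (Real.cos φ : ℂ) * E^2 *Eb^2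 + (-8 : ℂ) * (c : ℂ)^3 * (δ₀ : ℂ)^2 * E *Eb^2 + (-8 : ℂ) * (c : ℂ)^3 * (δ₀ : ℂ)^2 * E^2 *Eb + (-16 : ℂ) * (c : ℂ)^3 * (δ₀ : ℂ)^2 * E^2 *Eb^2 + (-4 : ℂ) * (c : ℂ)^4 * E^2 *Eb^2 + (8 : ℂ) * (c : ℂ)^4 * (Real.cos φ : ℂ) * E^2 *Eb^2 + (12 : ℂ) * (c : ℂ)^4 * (Real.cos φ : ℂ)^2 * E^2 *Eb^2 + (-32 : ℂ) * (c : ℂ)^4 * (δ₀ : ℂ) * (Real.cos φ : ℂ) * E^2 *Eb^2 + (16 : ℂ) * (c : ℂ)^4 * (δ₀ : ℂ)^2 * E^2 *Eb^2) * ((((Real.sqrt 2 : ℝ)) : ℂ)⁻¹^2 + (1:ℂ)/2)) * hs + ((4 : ℂ) + (-4 : ℂ) * E *Eb + (12 : ℂ) * (Real.cos φ : ℂ)^2 + (4 : ℂ) * (Real.cos φ : ℂ)^2 * E *Eb + (-8 : ℂ) * (δ₀ : ℂ) + (8 : ℂ) * (δ₀ : ℂ) * E *Eb + (-24 : ℂ)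 * (δ₀ : ℂ) * (Real.cos φ : ℂ) + (-8 : ℂ) * (δ₀ : ℂ) * (Real.cos φ : ℂ) * E *Eb + (16 : ℂ) * (δ₀ : ℂ)^2 + (16 : ℂ) * (c : ℂ) * E *Eb + (-16 : ℂ) * (c : ℂ) * (Real.cos φ : ℂ) + (-32 : ℂ) * (c : ℂ) * (Real.cos φ : ℂ)^2 + (-16 : ℂ) * (c : ℂ) * (Real.cos φ : ℂ)^2 * E *Eb + (16 : ℂ) * (c : ℂ) * (δ₀ : ℂ) + (-32 : ℂ) * (c : ℂ) * (δ₀ : ℂ) * E *Eb + (80 : ℂ) * (c : ℂ) * (δ₀ : ℂ) * (Real.cos φ : ℂ) + (32 : ℂ) * (c : ℂ) * (δ₀ : ℂ) * (Real.cos φ : ℂ) * E *Eb + (-48 : ℂ) * (c : ℂ) * (δ₀ : ℂ)^2 + (-16 : ℂ) * (c : ℂ)^2 + (8 : ℂ) * (c : ℂ)^2 *Eb + (8 : ℂ) * (c : ℂ)^2 * E + (-24 : ℂ) * (c : ℂ)^2 * E *Eb + (16 : ℂ) * (c : ℂ)^2 * (Real.cos φ : ℂ) + (40 : ℂ) * (c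 : ℂ)^2 * (Real.cos φ : ℂ)^2 + (-4 : ℂ) * (c : ℂ)^2 * (Real.cos φ : ℂ)^2 *Eb + (-4 : ℂ) * (c : ℂ)^2 * (Real.cos φ : ℂ)^2 * E + (28 : ℂ) * (c : ℂ)^2 * (Real.cos φ : ℂ)^2 * E *Eb + (16 : ℂ) * (c : ℂ)^2 * (δ₀ : ℂ) + (-16 : ℂ) * (c : ℂ)^2 * (δ₀ : ℂ) *Eb + (-16 : ℂ) * (c : ℂ)^2 * (δ₀ : ℂ) * E + (48 : ℂ) * (c : ℂ)^2 * (δ₀ : ℂ) * E *Eb + (-96 : ℂ) * (c : ℂ)^2 * (δ₀ : ℂ) * (Real.cos φ : ℂ) + (8 : ℂ) * (c : ℂ)^2 * (δ₀ : ℂ) * (Real.cos φ : ℂ) *Eb + (8 : ℂ) * (c : ℂ)^2 * (δ₀ : ℂ) * (Real.cos φ : ℂ) * E + (-56 : ℂ) * (c : ℂ)^2 * (δ₀ : ℂ) * (Real.cos φ : ℂ) * E *Eb + (40 : ℂ) * (c : ℂ)^2 * (δ₀ : ℂ)^2 + (4 : ℂ) * (c : ℂ)^2 * (δ₀ : ℂ)^2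 *Eb + (4 : ℂ) * (c : ℂ)^2 * (δ₀ : ℂ)^2 * E + (4 : ℂ) * (c : ℂ)^2 * (δ₀ : ℂ)^2 * E *Eb + (16 : ℂ) * (c : ℂ)^3 + (-8 : ℂ) * (c : ℂ)^3 *Eb + (-8 : ℂ) * (c : ℂ)^3 * E + (16 : ℂ) * (c : ℂ)^3 * E *Eb + (-8 : ℂ) * (c : ℂ)^3 * (Real.cos φ : ℂ) + (-4 : ℂ) * (c : ℂ)^3 * (Real.cos φ : ℂ) *Eb + (-4 : ℂ) * (c : ℂ)^3 * (Real.cos φ : ℂ) * E + (-8 : ℂ) * (c : ℂ)^3 * (Real.cos φ : ℂ) * E *Eb + (-24 : ℂ) * (c : ℂ)^3 * (Real.cos φ : ℂ)^2 + (4 : ℂ) * (c : ℂ)^3 * (Real.cos φ : ℂ)^2 *Eb + (4 : ℂ) * (c : ℂ)^3 * (Real.cos φ : ℂ)^2 * E + (-24 : ℂ) * (c : ℂ)^3 * (Real.cos φ : ℂ)^2 * E *Eb + (-24 : ℂ) * (c : ℂ)^3 * (δ₀ : ℂ) + (20 : ℂ) * (c : ℂ)^3 * (δ₀ : ℂ)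 *Eb + (20 : ℂ) * (c : ℂ)^3 * (δ₀ : ℂ) * E + (-24 : ℂ) * (c : ℂ)^3 * (δ₀ : ℂ) * E *Eb + (56 : ℂ) * (c : ℂ)^3 * (δ₀ : ℂ) * (Real.cos φ : ℂ) + (-4 : ℂ) * (c : ℂ)^3 * (δ₀ : ℂ) * (Real.cos φ : ℂ) *Eb + (-4 : ℂ) * (c : ℂ)^3 * (δ₀ : ℂ) * (Real.cos φ : ℂ) * E + (56 : ℂ) * (c : ℂ)^3 * (δ₀ : ℂ) * (Real.cos φ : ℂ) * E *Eb + (-16 : ℂ) * (c : ℂ)^3 * (δ₀ : ℂ)^2 + (-8 : ℂ) * (c : ℂ)^3 * (δ₀ : ℂ)^2 *Eb + (-8 : ℂ) * (c : ℂ)^3 * (δ₀ : ℂ)^2 * E + (-16 : ℂ) * (c : ℂ)^3 * (δ₀ : ℂ)^2 * E *Eb + (-4 : ℂ) * (c : ℂ)^4 + (-4 : ℂ) * (c : ℂ)^4 * E *Eb + (8 : ℂ) * (c : ℂ)^4 * (Real.cos φ : ℂ) + (8 : ℂ) * (c : ℂ)^4 * (Real.cos φ : ℂ) * E *Eb + (12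 : ℂ) * (c : ℂ)^4 * (Real.cos φ : ℂ)^2 + (12 : ℂ) * (c : ℂ)^4 * (Real.cos φ : ℂ)^2 * E *Eb + (-32 : ℂ) * (c : ℂ)^4 * (δ₀ : ℂ) * (Real.cos φ : ℂ) + (-32 : ℂ) * (c : ℂ)^4 * (δ₀ : ℂ) * (Real.cos φ : ℂ) * E *Eb + (16 : ℂ) * (c : ℂ)^4 * (δ₀ : ℂ)^2 + (16 : ℂ) * (c : ℂ)^4 * (δ₀ : ℂ)^2 * E *Eb) * hEE + ((-4 : ℂ) *Eb + (-4 : ℂ) * E + (-8 : ℂ) * (Real.cos φ : ℂ) + (8 : ℂ) * (δ₀ : ℂ) *Eb + (8 : ℂ) * (δ₀ : ℂ) * E + (16 : ℂ) * (δ₀ : ℂ) * (Real.cos φ : ℂ) + (-4 : ℂ) * (δ₀ : ℂ)^2 *Eb + (-4 : ℂ) * (δ₀ : ℂ)^2 * E + (-8 : ℂ) * (δ₀ : ℂ)^2 * (Real.cos φ : ℂ) + (8 : ℂ) * (c : ℂ) *Eb + (8 : ℂ) * (c : ℂ) * E + (16 : ℂ) * (c : ℂ) * (Real.cos φ : ℂ)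 + (4 : ℂ) * (c : ℂ) * (Real.cos φ : ℂ) *Eb + (4 : ℂ) * (c : ℂ) * (Real.cos φ : ℂ) * E + (8 : ℂ) * (c : ℂ) * (Real.cos φ : ℂ)^2 + (-20 : ℂ) * (c : ℂ) * (δ₀ : ℂ) *Eb + (-20 : ℂ) * (c : ℂ) * (δ₀ : ℂ) * E + (-40 : ℂ) * (c : ℂ) * (δ₀ : ℂ) * (Real.cos φ : ℂ) + (-4 : ℂ) * (c : ℂ) * (δ₀ : ℂ) * (Real.cos φ : ℂ) *Eb + (-4 : ℂ) * (c : ℂ) * (δ₀ : ℂ) * (Real.cos φ : ℂ) * E + (-8 : ℂ) * (c : ℂ) * (δ₀ : ℂ) * (Real.cos φ : ℂ)^2 + (12 : ℂ) * (c : ℂ) * (δ₀ : ℂ)^2 *Eb + (12 : ℂ) * (c : ℂ) * (δ₀ : ℂ)^2 * E + (24 : ℂ) * (c : ℂ) * (δ₀ : ℂ)^2 * (Real.cos φ : ℂ) + (8 : ℂ) * (c : ℂ)^2 + (-4 : ℂ) * (c : ℂ)^2 *Eb + (-4 : ℂ) * (c : ℂ)^2 * E + (-8 : ℂ) * (c :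 ℂ)^2 * (Real.cos φ : ℂ) + (-4 : ℂ) * (c : ℂ)^2 * (Real.cos φ : ℂ) *Eb + (-4 : ℂ) * (c : ℂ)^2 * (Real.cos φ : ℂ) * E + (-12 : ℂ) * (c : ℂ)^2 * (Real.cos φ : ℂ)^2 + (-16 : ℂ) * (c : ℂ)^2 * (δ₀ : ℂ) + (12 : ℂ) * (c : ℂ)^2 * (δ₀ : ℂ) *Eb + (12 : ℂ) * (c : ℂ)^2 * (δ₀ : ℂ) * E + (32 : ℂ) * (c : ℂ)^2 * (δ₀ : ℂ) * (Real.cos φ : ℂ) + (4 : ℂ) * (c : ℂ)^2 * (δ₀ : ℂ) * (Real.cos φ : ℂ) *Eb + (4 : ℂ) * (c : ℂ)^2 * (δ₀ : ℂ) * (Real.cos φ : ℂ) * E + (8 : ℂ) * (c : ℂ)^2 * (δ₀ : ℂ) * (Real.cos φ : ℂ)^2 + (4 : ℂ) * (c : ℂ)^2 * (δ₀ : ℂ)^2 + (-8 : ℂ) * (c : ℂ)^2 * (δ₀ : ℂ)^2 *Eb + (-8 : ℂ) * (c : ℂ)^2 * (δ₀ : ℂ)^2 * E + (-16 : ℂ)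 * (c : ℂ)^2 * (δ₀ : ℂ)^2 * (Real.cos φ : ℂ) + (-8 : ℂ) * (c : ℂ)^3 + (-4 : ℂ) * (c : ℂ)^3 * (Real.cos φ : ℂ) + (4 : ℂ) * (c : ℂ)^3 * (Real.cos φ : ℂ)^2 + (20 : ℂ) * (c : ℂ)^3 * (δ₀ : ℂ) + (-4 : ℂ) * (c : ℂ)^3 * (δ₀ : ℂ) * (Real.cos φ : ℂ) + (-8 : ℂ) * (c : ℂ)^3 * (δ₀ : ℂ)^2) * hcos
  rw [hdet]
  obtain ⟨hc0, hc1, hcq⟩ := hc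
  obtain ⟨hd1, hdq⟩ := hδ
  obtain ⟨hcl, hcu⟩ := bounds_c' c hc0 hc1 hcq
  obtain ⟨hdl, hdu⟩ := bounds_d' δ₀ hd1 hdq
  have hG := Gpos' c δ₀ (Real.cos φ) hcl hcu hdl hdu (Real.neg_one_le_cos φ) (Real.cos_le_one φ)
  have hcast : ((((-32 : ℝ) * δ₀ * (Real.cos φ) + (32 : ℝ) * δ₀ * (Real.cos φ)^2 + (16 : ℝ) * δ₀^2 + (-16 : ℝ) * δ₀^2 * (Real.cos φ)^2 + (-16 : ℝ) * c * (Real.cos φ) + (16 : ℝ) * c * (Real.cos φ)^3 + (16 : ℝ) * c * δ₀ + (80 : ℝ) * c * δ₀ * (Real.cos φ) + (-80 : ℝ) * c * δ₀ * (Real.cos φ)^2 + (-16 : ℝ) * c * δ₀ * (Real.cos φ)^3 + (-48 : ℝ) * c * δ₀^2 + (48 : ℝ) * c * δ₀^2 * (Real.cos φ)^2 + (-16 : ℝ) * c^2 + (32 : ℝ) * c^2 * (Real.cos φ) + (24 : ℝ) * c^2 * (Real.cos φ)^2 + (-24 : ℝ) * c^2 * (Real.cos φ)^3 + (16 : ℝ)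 * c^2 * δ₀ + (-128 : ℝ) * c^2 * δ₀ * (Real.cos φ) + (64 : ℝ) * c^2 * δ₀ * (Real.cos φ)^2 + (16 : ℝ) * c^2 * δ₀ * (Real.cos φ)^3 + (40 : ℝ) * c^2 * δ₀^2 + (8 : ℝ) * c^2 * δ₀^2 * (Real.cos φ) + (-32 : ℝ) * c^2 * δ₀^2 * (Real.cos φ)^2 + (16 : ℝ) * c^3 + (-24 : ℝ) * c^3 * (Real.cos φ) + (-32 : ℝ) * c^3 * (Real.cos φ)^2 + (8 : ℝ) * c^3 * (Real.cos φ)^3 + (-24 : ℝ) * c^3 * δ₀ + (96 : ℝ) * c^3 * δ₀ * (Real.cos φ) + (-8 : ℝ) * c^3 * δ₀ * (Real.cos φ)^2 + (-16 : ℝ) * c^3 * δ₀^2 + (-16 : ℝ) * c^3 * δ₀^2 * (Real.cos φ) + (-4 : ℝ) * c^4 + (8 : ℝ) * c^4 * (Real.cos φ) + (12 : ℝ) * c^4 * (Real.cos φ)^2 + (-32 : ℝ) * c^4 * δ₀ * (Real.cos φ) + (16 : ℝ) * c^4 * δ₀^2) : ℝ) : ℂ) = ((-32 : ℂ) * (δ₀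 : ℂ) * (Real.cos φ : ℂ) + (32 : ℂ) * (δ₀ : ℂ) * (Real.cos φ : ℂ)^2 + (16 : ℂ) * (δ₀ : ℂ)^2 + (-16 : ℂ) * (δ₀ : ℂ)^2 * (Real.cos φ : ℂ)^2 + (-16 : ℂ) * (c : ℂ) * (Real.cos φ : ℂ) + (16 : ℂ) * (c : ℂ) * (Real.cos φ : ℂ)^3 + (16 : ℂ) * (c : ℂ) * (δ₀ : ℂ) + (80 : ℂ) * (c : ℂ) * (δ₀ : ℂ) * (Real.cos φ : ℂ) + (-80 : ℂ) * (c : ℂ) * (δ₀ : ℂ) * (Real.cos φ : ℂ)^2 + (-16 : ℂ) * (c : ℂ) * (δ₀ : ℂ) * (Real.cos φ : ℂ)^3 + (-48 : ℂ) * (c : ℂ) * (δ₀ : ℂ)^2 + (48 : ℂ) * (c : ℂ) * (δ₀ : ℂ)^2 * (Real.cos φ : ℂ)^2 + (-16 : ℂ) * (c : ℂ)^2 + (32 : ℂ) * (c : ℂ)^2 * (Real.cos φ : ℂ) + (24 : ℂ) * (c : ℂ)^2 * (Real.cos φ : ℂ)^2 + (-24 : ℂ) * (c : ℂ)^2 *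 (Real.cos φ : ℂ)^3 + (16 : ℂ) * (c : ℂ)^2 * (δ₀ : ℂ) + (-128 : ℂ) * (c : ℂ)^2 * (δ₀ : ℂ) * (Real.cos φ : ℂ) + (64 : ℂ) * (c : ℂ)^2 * (δ₀ : ℂ) * (Real.cos φ : ℂ)^2 + (16 : ℂ) * (c : ℂ)^2 * (δ₀ : ℂ) * (Real.cos φ : ℂ)^3 + (40 : ℂ) * (c : ℂ)^2 * (δ₀ : ℂ)^2 + (8 : ℂ) * (c : ℂ)^2 * (δ₀ : ℂ)^2 * (Real.cos φ : ℂ) + (-32 : ℂ) * (c : ℂ)^2 * (δ₀ : ℂ)^2 * (Real.cos φ : ℂ)^2 + (16 : ℂ) * (c : ℂ)^3 + (-24 : ℂ) * (c : ℂ)^3 * (Real.cos φ : ℂ) + (-32 : ℂ) * (c : ℂ)^3 * (Real.cos φ : ℂ)^2 + (8 : ℂ) * (c : ℂ)^3 * (Real.cos φ : ℂ)^3 + (-24 : ℂ) * (c : ℂ)^3 * (δ₀ : ℂ) + (96 : ℂ) * (c : ℂ)^3 * (δ₀ : ℂ) * (Real.cos φ : ℂ) + (-8 : ℂ) * (c :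 ℂ)^3 * (δ₀ : ℂ) * (Real.cos φ : ℂ)^2 + (-16 : ℂ) * (c : ℂ)^3 * (δ₀ : ℂ)^2 + (-16 : ℂ) * (c : ℂ)^3 * (δ₀ : ℂ)^2 * (Real.cos φ : ℂ) + (-4 : ℂ) * (c : ℂ)^4 + (8 : ℂ) * (c : ℂ)^4 * (Real.cos φ : ℂ) + (12 : ℂ) * (c : ℂ)^4 * (Real.cos φ : ℂ)^2 + (-32 : ℂ) * (c : ℂ)^4 * (δ₀ : ℂ) * (Real.cos φ : ℂ) + (16 : ℂ) * (c : ℂ)^4 * (δ₀ : ℂ)^2) := by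
    push_cast
    ring
  rw [← hcast, Ne, Complex.ofReal_eq_zero]
  exact ne_of_gt hG
end
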